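/- arXiv:math/0602121 — 5 statements merged into one kernel-verified Lean document; each statement's English description precedes it below -/
import Mathlib

section
/- Let {p_θ} be a family of strictly positive densities on an interval I ⊆ ℝ with respect to Lebesgue measure, with strictly monotone likelihood ratio (for θ' < θ'', the ratio p_{θ''}/p_{θ'} is strictly increasing). Fix θ₁ and let Θ₁ = (-∞,θ₁] ∩ Θ, Θ₀ = (θ₁,∞) ∩ Θ, both nonempty. Then for every t ∈ ℝ, the decision rule φ = 1_{(-∞,t)} satisfies: for all θ' ≤ θ₁ < θ'' and every Borel set C ⊆ I of positive Lebesgue measure, P_{θ'}(C ∩ (-∞,t))/P_{θ'}(C) ≥ P_{θ''}(C ∩ (-∞,t))/P_{θ''}(C), where P_θ has density p_θ. -/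
open MeasureTheory Set

theorem stmt0
    (I Θ : Set ℝ) (hI : I.OrdConnected) (hΘ : Θ.OrdConnected)
    (p : ℝ → ℝ → ℝ)
    (hpos : ∀ θ ∈ Θ, ∀ x ∈ I, 0 < p θ x)
    (hmeas : ∀ θ ∈ Θ, Measurable (p θ))
    (hMLR : ∀ θ' ∈ Θ, ∀ θ'' ∈ Θ, θ' < θ'' →
      StrictMonoOn (fun x => p θ'' x / p θ' x) I)
    (hprob : ∀ θ ∈ Θ, ∫ x in I, p θ x = 1)
    (P : ℝ → Set ℝ → ℝ)
    (hP : ∀ θ s, P θ s = ∫ x in s ∩ I, p θ x)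
    (θ₁ : ℝ) (hθ₁ : θ₁ ∈ Θ)
    (hne₁ : (Iic θ₁ ∩ Θ).Nonempty) (hne₀ : (Ioi θ₁ ∩ Θ).Nonempty) :
    ∀ t : ℝ, ∀ θ' ∈ Θ, ∀ θ'' ∈ Θ, θ' ≤ θ₁ → θ₁ < θ'' →
      ∀ C : Set ℝ, MeasurableSet C → C ⊆ I → 0 < volume C →
        P θ'' (C ∩ Iio t) / P θ'' C ≤ P θ' (C ∩ Iio t) / P θ' C := by
  intro t θ' hθ' θ'' hθ'' hle hlt C hC hCI hCpos
  have hθlt : θ' < θ'' := lt_of_le_of_lt hle hlt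
  -- integrability on I
  have hint : ∀ θ ∈ Θ, IntegrableOn (p θ) I := by
    intro θ hθ
    by_contra h
    have h1 := hprob θ hθ
    rw [integral_undef h] at h1
    norm_num at h1
  set A : Set ℝ := C ∩ Iio t with hAdef
  set B : Set ℝ := C \ Iio t with hBdef
  have hAI : A ⊆ I := fun x hx => hCI hx.1
  have hBI : B ⊆ I := fun x hx => hCI hx.1
  have hAm : MeasurableSet A := hC.inter measurableSet_Iio
  have hBm : MeasurableSet B := hC.diff measurableSet_Iio
  have hintA' : IntegrableOn (p θ') A := (hint θ' hθ').mono_set hAI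
  have hintA'' : IntegrableOn (p θ'') A := (hint θ'' hθ'').mono_set hAI
  have hintB' : IntegrableOn (p θ') B := (hint θ' hθ').mono_set hBI
  have hintB'' : IntegrableOn (p θ'') B := (hint θ'' hθ'').mono_set hBI
  set a' : ℝ := ∫ x in A, p θ' x with ha'
  set a'' : ℝ := ∫ x in A, p θ'' x with ha''
  set b' : ℝ := ∫ x in B, p θ' x with hb'
  set b'' : ℝ := ∫ x in B, p θ'' x with hb''
  have ha'nn : 0 ≤ a' := setIntegral_nonneg hAm fun x hx => (hpos θ' hθ' x (hAI hx)).le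
  have ha''nn : 0 ≤ a'' := setIntegral_nonneg hAm fun x hx => (hpos θ'' hθ'' x (hAI hx)).le
  have hb'nn : 0 ≤ b' := setIntegral_nonneg hBm fun x hx => (hpos θ' hθ' x (hBI hx)).le
  have hb''nn : 0 ≤ b'' := setIntegral_nonneg hBm fun x hx => (hpos θ'' hθ'' x (hBI hx)).le
  -- key product inequality
  have key : a'' * b' ≤ a' * b'' := by
    rcases eq_or_ne (volume A) 0 with hA0 | hA0
    · have e1 : a'' = 0 := by
        rw [ha'', Measure.restrict_eq_zero.mpr hA0]; exact integral_zero_measure _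
      have e2 : a' = 0 := by
        rw [ha', Measure.restrict_eq_zero.mpr hA0]; exact integral_zero_measure _
      simp [e1, e2]
    · rcases eq_or_ne (volume B) 0 with hB0 | hB0
      · have e1 : b'' = 0 := by
          rw [hb'', Measure.restrict_eq_zero.mpr hB0]; exact integral_zero_measure _
        have e2 : b' = 0 := by
          rw [hb', Measure.restrict_eq_zero.mpr hB0]; exact integral_zero_measure _
        simp [e1, e2]
      · obtain ⟨x₀, hx₀⟩ : A.Nonempty := nonempty_of_measure_ne_zero hA0
        obtain ⟨y₀, hy₀⟩ : B.Nonempty := nonempty_of_measure_ne_zero hB0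
        have hr : ∀ x ∈ A, ∀ y ∈ B, p θ'' x / p θ' x ≤ p θ'' y / p θ' y := by
          intro x hx y hy
          have hxy : x < y := lt_of_lt_of_le hx.2 (not_lt.mp hy.2)
          exact ((hMLR θ' hθ' θ'' hθ'' hθlt) (hAI hx) (hBI hy) hxy).le
        set S : Set ℝ := (fun y => p θ'' y / p θ' y) '' B with hSdef
        have hSne : S.Nonempty := ⟨_, ⟨y₀, hy₀, rfl⟩⟩
        have hSbdd : BddBelow S := by
          refine ⟨p θ'' x₀ / p θ' x₀, ?_⟩
          rintro z ⟨y, hy, rfl⟩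
          exact hr x₀ hx₀ y hy
        set k : ℝ := sInf S with hk
        have hk1 : ∀ x ∈ A, p θ'' x / p θ' x ≤ k := by
          intro x hx
          apply le_csInf hSne
          rintro z ⟨y, hy, rfl⟩
          exact hr x hx y hy
        have hk2 : ∀ y ∈ B, k ≤ p θ'' y / p θ' y := fun y hy =>
          csInf_le hSbdd ⟨y, hy, rfl⟩
        have hknn : 0 ≤ k := by
          apply le_csInf hSne
          rintro z ⟨y, hy, rfl⟩
          exact (div_pos (hpos θ'' hθ'' y (hBI hy)) (hpos θ' hθ' y (hBI hy))).le
        have hup : a'' ≤ k * a' := by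
          have : a'' ≤ ∫ x in A, k * p θ' x := by
            apply setIntegral_mono_on hintA'' (hintA'.const_mul k) hAm
            intro x hx
            exact (div_le_iff₀ (hpos θ' hθ' x (hAI hx))).mp (hk1 x hx)
          rwa [integral_const_mul] at this
        have hdown : k * b' ≤ b'' := by
          have : (∫ y in B, k * p θ' y) ≤ b'' := by
            apply setIntegral_mono_on (hintB'.const_mul k) hintB'' hBm
            intro y hy
            exact (le_div_iff₀ (hpos θ' hθ' y (hBI hy))).mp (hk2 y hy)
          rwa [integral_const_mul] at this
        calc a'' * b' ≤ (k * a') * b' := mul_le_mul_of_nonneg_right hup hb'nn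
          _ = a' * (k * b') := by ring
          _ ≤ a' * b'' := mul_le_mul_of_nonneg_left hdown ha'nn
  -- rewrite P
  have eA : (C ∩ Iio t) ∩ I = A := inter_eq_left.mpr fun x hx => hCI hx.1
  have eC : C ∩ I = C := inter_eq_left.mpr hCI
  have hsplit : ∀ θ ∈ Θ, (∫ x in C, p θ x) = (∫ x in A, p θ x) + (∫ x in B, p θ x) := by
    intro θ hθ
    rw [hAdef, hBdef]
    exact (integral_inter_add_diff measurableSet_Iio ((hint θ hθ).mono_set hCI)).symm
  have hposC : ∀ θ ∈ Θ, 0 < ∫ x in C, p θ x := by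
    intro θ hθ
    have hnn : 0 ≤ᵐ[volume.restrict C] p θ :=
      (ae_restrict_iff' hC).mpr (ae_of_all _ fun x hx => (hpos θ hθ x (hCI hx)).le)
    rw [setIntegral_pos_iff_support_of_nonneg_ae hnn ((hint θ hθ).mono_set hCI)]
    have : Function.support (p θ) ∩ C = C :=
      inter_eq_right.mpr fun x hx => ne_of_gt (hpos θ hθ x (hCI hx))
    rwa [this]
  have hC' : 0 < ∫ x in C, p θ' x := hposC θ' hθ'
  have hC'' : 0 < ∫ x in C, p θ'' x := hposC θ'' hθ''
  rw [hP, hP, hP, hP, eA, eC, div_le_div_iff₀ hC'' hC']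
  rw [hsplit θ' hθ', hsplit θ'' hθ'']
  nlinarith [key]
end

section
/- Let {p_θ} be a family of strictly positive densities on an interval I ⊆ ℝ with strictly monotone likelihood ratio, and let φ : I → {0,1} be measurable. Suppose there exist t' < t < t'' such that A = [t',t) ∩ {φ=0} and B = (t,t''] ∩ {φ=1} both have positive Lebesgue measure. Then for any θ' < θ'' in Θ, setting C = A ∪ B, one has P_{θ'}(C ∩ {φ=1})/P_{θ'}(C) < P_{θ''}(C ∩ {φ=1})/P_{θ''}(C). In particular φ is not an expert for any one-sided problem with boundary between θ' and θ''. -/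
open MeasureTheory Set

private lemma aux_setIntegral_pos {f : ℝ → ℝ} {s : Set ℝ} (hs : MeasurableSet s)
    (hμ : 0 < volume s) (hfi : IntegrableOn f s) (hf : ∀ x ∈ s, 0 < f x) :
    0 < ∫ x in s, f x := by
  rw [setIntegral_pos_iff_support_of_nonneg_ae ?_ hfi]
  · refine lt_of_lt_of_le hμ (measure_mono fun x hx => ⟨(hf x hx).ne', hx⟩)
  · filter_upwards [ae_restrict_mem hs] with x hx using (hf x hx).le

theorem stmt1
    (I Θ : Set ℝ) (hI : I.OrdConnected) (hΘ : Θ.OrdConnected)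
    (p : ℝ → ℝ → ℝ)
    (hpos : ∀ θ ∈ Θ, ∀ x ∈ I, 0 < p θ x)
    (hmeas : ∀ θ ∈ Θ, Measurable (p θ))
    (hMLR : ∀ θ' ∈ Θ, ∀ θ'' ∈ Θ, θ' < θ'' →
      StrictMonoOn (fun x => p θ'' x / p θ' x) I)
    (hprob : ∀ θ ∈ Θ, ∫ x in I, p θ x = 1)
    (P : ℝ → Set ℝ → ℝ)
    (hP : ∀ θ s, P θ s = ∫ x in s ∩ I, p θ x)
    (D : Set ℝ) (hD : MeasurableSet D)
    (t' t t'' : ℝ) (ht' : t' < t) (ht'' : t < t'')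
    (hA : 0 < volume (Ico t' t ∩ Dᶜ ∩ I))
    (hB : 0 < volume (Ioc t t'' ∩ D ∩ I)) :
    ∀ θ' ∈ Θ, ∀ θ'' ∈ Θ, θ' < θ'' →
      (P θ' (((Ico t' t ∩ Dᶜ ∩ I) ∪ (Ioc t t'' ∩ D ∩ I)) ∩ D) /
          P θ' ((Ico t' t ∩ Dᶜ ∩ I) ∪ (Ioc t t'' ∩ D ∩ I))
        < P θ'' (((Ico t' t ∩ Dᶜ ∩ I) ∪ (Ioc t t'' ∩ D ∩ I)) ∩ D) /
          P θ'' ((Ico t' t ∩ Dᶜ ∩ I) ∪ (Ioc t t'' ∩ D ∩ I))) ∧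
      ∀ θb : ℝ, θ' ≤ θb → θb < θ'' →
        ¬ (∀ θlow ∈ Θ, θlow ≤ θb → ∀ θhigh ∈ Θ, θb < θhigh →
            ∀ C : Set ℝ, MeasurableSet C → C ⊆ I → 0 < volume C →
              P θhigh (C ∩ D) / P θhigh C ≤ P θlow (C ∩ D) / P θlow C) := by
  intro θ1 hθ1 θ2 hθ2 hθ
  set A : Set ℝ := Ico t' t ∩ Dᶜ ∩ I with hAdef
  set B : Set ℝ := Ioc t t'' ∩ D ∩ I with hBdef
  have hIm : MeasurableSet I := hI.measurableSet
  have hAm : MeasurableSet A := ((measurableSet_Ico.inter hD.compl).inter hIm)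
  have hBm : MeasurableSet B := ((measurableSet_Ioc.inter hD).inter hIm)
  have hAI : A ⊆ I := fun x hx => hx.2
  have hBI : B ⊆ I := fun x hx => hx.2
  -- t ∈ I
  obtain ⟨xa, hxa⟩ := nonempty_of_measure_ne_zero hA.ne'
  obtain ⟨xb, hxb⟩ := nonempty_of_measure_ne_zero hB.ne'
  have htI : t ∈ I := hI.out (hAI hxa) (hBI hxb) ⟨hxa.1.1.2.le, hxb.1.1.1.le⟩
  -- integrability
  have hint : ∀ θ ∈ Θ, IntegrableOn (p θ) I := by
    intro θ hθ
    by_contra h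
    have := integral_undef h
    rw [hprob θ hθ] at this
    norm_num at this
  have hintA1 : IntegrableOn (p θ1) A := (hint θ1 hθ1).mono_set hAI
  have hintA2 : IntegrableOn (p θ2) A := (hint θ2 hθ2).mono_set hAI
  have hintB1 : IntegrableOn (p θ1) B := (hint θ1 hθ1).mono_set hBI
  have hintB2 : IntegrableOn (p θ2) B := (hint θ2 hθ2).mono_set hBI
  set r : ℝ := p θ2 t / p θ1 t with hrdef
  have hr : 0 < r := div_pos (hpos θ2 hθ2 t htI) (hpos θ1 hθ1 t htI)
  set a1 : ℝ := ∫ x in A, p θ1 x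
  set a2 : ℝ := ∫ x in A, p θ2 x
  set b1 : ℝ := ∫ x in B, p θ1 x
  set b2 : ℝ := ∫ x in B, p θ2 x
  have ha1 : 0 < a1 := aux_setIntegral_pos hAm hA hintA1 fun x hx => hpos θ1 hθ1 x (hAI hx)
  have hb1 : 0 < b1 := aux_setIntegral_pos hBm hB hintB1 fun x hx => hpos θ1 hθ1 x (hBI hx)
  have ha2 : 0 < a2 := aux_setIntegral_pos hAm hA hintA2 fun x hx => hpos θ2 hθ2 x (hAI hx)
  have hb2 : 0 < b2 := aux_setIntegral_pos hBm hB hintB2 fun x hx => hpos θ2 hθ2 x (hBI hx)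
  -- key strict inequalities
  have key1 : a2 < r * a1 := by
    have hpos' : 0 < ∫ x in A, (r * p θ1 x - p θ2 x) := by
      refine aux_setIntegral_pos hAm hA ((hintA1.const_mul r).sub hintA2) fun x hx => ?_
      have hx1 : 0 < p θ1 x := hpos θ1 hθ1 x (hAI hx)
      have hlt : p θ2 x / p θ1 x < r := hMLR θ1 hθ1 θ2 hθ2 hθ (hAI hx) htI hx.1.1.2
      have := (div_lt_iff₀ hx1).mp hlt
      linarith
    have heq : ∫ x in A, (r * p θ1 x - p θ2 x) = r * a1 - a2 := by
      rw [integral_sub (hintA1.const_mul r) hintA2, integral_const_mul]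
    linarith [heq ▸ hpos']
  have key2 : r * b1 < b2 := by
    have hpos' : 0 < ∫ x in B, (p θ2 x - r * p θ1 x) := by
      refine aux_setIntegral_pos hBm hB (hintB2.sub (hintB1.const_mul r)) fun x hx => ?_
      have hx1 : 0 < p θ1 x := hpos θ1 hθ1 x (hBI hx)
      have hlt : r < p θ2 x / p θ1 x := hMLR θ1 hθ1 θ2 hθ2 hθ htI (hBI hx) hx.1.1.1
      have := (lt_div_iff₀ hx1).mp hlt
      linarith
    have heq : ∫ x in B, (p θ2 x - r * p θ1 x) = b2 - r * b1 := by
      rw [integral_sub hintB2 (hintB1.const_mul r), integral_const_mul]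
    linarith [heq ▸ hpos']
  -- set identities
  have hdisj : Disjoint A B := by
    rw [Set.disjoint_left]
    intro x hxA hxB
    exact absurd hxB.1.1.1 (not_lt.mpr hxA.1.1.2.le)
  have hCD : ((A ∪ B) ∩ D) = B := by
    ext x
    simp only [mem_inter_iff, mem_union, hAdef, hBdef, mem_compl_iff]
    tauto
  have hCI : (A ∪ B) ∩ I = A ∪ B := inter_eq_left.mpr (union_subset hAI hBI)
  have hPC : ∀ θ ∈ Θ, P θ (A ∪ B) = (∫ x in A, p θ x) + ∫ x in B, p θ x := by
    intro θ hθ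
    rw [hP, hCI, setIntegral_union hdisj hBm ((hint θ hθ).mono_set hAI)
      ((hint θ hθ).mono_set hBI)]
  have hPB : ∀ θ, P θ ((A ∪ B) ∩ D) = ∫ x in B, p θ x := by
    intro θ
    rw [hP, hCD, inter_eq_left.mpr hBI]
  have hmain : P θ1 ((A ∪ B) ∩ D) / P θ1 (A ∪ B)
      < P θ2 ((A ∪ B) ∩ D) / P θ2 (A ∪ B) := by
    rw [hPB, hPB, hPC θ1 hθ1, hPC θ2 hθ2]
    rw [div_lt_div_iff₀ (by linarith) (by linarith)]
    nlinarith
  refine ⟨hmain, ?_⟩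
  intro θb hθb1 hθb2 h
  have := h θ1 hθ1 hθb1 θ2 hθ2 hθb2 (A ∪ B) (hAm.union hBm) (union_subset hAI hBI)
    (lt_of_lt_of_le hA (measure_mono subset_union_left))
  linarith
end

section
/- In the Gaussian model {N(θ,1)}_{θ∈ℝ} with two-sided hypotheses Θ₁ = (-∞,θ₁) ∪ (θ₂,∞) and Θ₀ = [θ₁,θ₂], θ₁ < θ₂, the only experts (on the full Borel σ-algebra) are the trivial rules φ ≡ 0 and φ ≡ 1 (up to null sets). Indeed, any expert for (Θ₀, Θ₁) is simultaneously an expert for the one-sided problem ((-∞,θ₁), [θ₁,θ₂]) and for ([θ₁,θ₂], (θ₂,∞)), forcing it to be a.s. of the form 1_{(-∞,t)} and a.s. of the form 1_{(t',∞)}, which is only possible for the trivial rules. -/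
/-!
For `θ ≠ θ₁` the likelihood ratio of `N(θ, 1)` to `N(θ₁, 1)` is
`x ↦ exp ((θ - θ₁) x - (θ² - θ₁²) / 2)`, strictly increasing if `θ > θ₁` and strictly decreasing
if `θ < θ₁`. Conditioning the expert inequality (with `θ₀ = θ₁`) on `C = A ∪ B` with `A ⊆ D` and
`B ⊆ Dᶜ` gives `P_θ₁(A) P_θ(B) ≤ P_θ(A) P_θ₁(B)`. For `θ > θ₂` this rules out a non-null part of
`D` lying left of a gap followed by a non-null part of `Dᶜ`; for `θ < θ₁` it rules out the mirror
configuration. A set of reals for which neither configuration occurs is null or conull.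
-/

open MeasureTheory Set ProbabilityTheory

open scoped NNReal

lemma gaussianPDFReal_eq_exp_mul (μ μ' : ℝ) (v : ℝ≥0) (x : ℝ) :
    gaussianPDFReal μ' v x
      = Real.exp (((μ' - μ) * x - (μ' ^ 2 - μ ^ 2) / 2) / v) * gaussianPDFReal μ v x := by
  simp only [gaussianPDFReal]
  rw [mul_left_comm, ← Real.exp_add]
  congr 2
  ring

section Gaussian

variable {v : ℝ≥0}

lemma measureReal_gaussianReal (μ : ℝ) (hv : v ≠ 0) (s : Set ℝ) :
    (gaussianReal μ v).real s = ∫ x in s, gaussianPDFReal μ v x := by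
  rw [measureReal_def, gaussianReal_apply_eq_integral μ hv,
    ENNReal.toReal_ofReal (integral_nonneg (gaussianPDFReal_nonneg μ v))]

lemma measureReal_gaussianReal_pos (μ : ℝ) (hv : v ≠ 0) {s : Set ℝ} (hs : volume s ≠ 0) :
    0 < (gaussianReal μ v).real s :=
  ENNReal.toReal_pos (mt (gaussianReal_absolutelyContinuous' μ hv ·) hs) (measure_ne_top _ _)

lemma mul_measureReal_gaussianReal_le {μ₁ μ₂ c₁ c₂ : ℝ} (hv : v ≠ 0) {s : Set ℝ}
    (hs : MeasurableSet s)
    (h : ∀ x ∈ s, c₁ * gaussianPDFReal μ₁ v x ≤ c₂ * gaussianPDFReal μ₂ v x) :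
    c₁ * (gaussianReal μ₁ v).real s ≤ c₂ * (gaussianReal μ₂ v).real s := by
  simp only [measureReal_gaussianReal _ hv, ← integral_const_mul]
  exact setIntegral_mono_on ((integrable_gaussianPDFReal _ _).const_mul _).integrableOn
    ((integrable_gaussianPDFReal _ _).const_mul _).integrableOn hs h

lemma measureReal_gaussianReal_mul_lt_mul {μ μ' : ℝ} (hμ : μ < μ') (hv : v ≠ 0) {A B : Set ℝ}
    (hA : MeasurableSet A) (hB : MeasurableSet B) (hA0 : volume A ≠ 0) (hB0 : volume B ≠ 0)
    {a b : ℝ} (hab : a < b) (hAa : A ⊆ Iic a) (hBb : B ⊆ Ici b) :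
    (gaussianReal μ' v).real A * (gaussianReal μ v).real B
      < (gaussianReal μ v).real A * (gaussianReal μ' v).real B := by
  set L : ℝ → ℝ := fun x ↦ Real.exp (((μ' - μ) * x - (μ' ^ 2 - μ ^ 2) / 2) / v)
  have hL : StrictMono L := fun x y hxy ↦ by
    have : (0 : ℝ) < v := NNReal.coe_pos.2 (pos_iff_ne_zero.2 hv)
    have : 0 < μ' - μ := sub_pos.2 hμ
    simp only [L]
    gcongr
  have hLA : (gaussianReal μ' v).real A ≤ L a * (gaussianReal μ v).real A := by
    simpa only [one_mul] using mul_measureReal_gaussianReal_le (c₁ := 1) hv hA fun x hx ↦ by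
      rw [one_mul, gaussianPDFReal_eq_exp_mul μ μ']
      exact mul_le_mul_of_nonneg_right (hL.monotone (hAa hx)) (gaussianPDFReal_nonneg _ _ _)
  have hLB : L b * (gaussianReal μ v).real B ≤ (gaussianReal μ' v).real B := by
    simpa only [one_mul] using mul_measureReal_gaussianReal_le (c₂ := 1) hv hB fun x hx ↦ by
      rw [one_mul, gaussianPDFReal_eq_exp_mul μ μ']
      exact mul_le_mul_of_nonneg_right (hL.monotone (hBb hx)) (gaussianPDFReal_nonneg _ _ _)
  have hPA := measureReal_gaussianReal_pos μ hv hA0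
  have hPB := measureReal_gaussianReal_pos μ hv hB0
  calc (gaussianReal μ' v).real A * (gaussianReal μ v).real B
      ≤ L a * (gaussianReal μ v).real A * (gaussianReal μ v).real B := by gcongr
    _ < L b * (gaussianReal μ v).real A * (gaussianReal μ v).real B := by gcongr; exact hL hab
    _ = (gaussianReal μ v).real A * (L b * (gaussianReal μ v).real B) := by ring
    _ ≤ (gaussianReal μ v).real A * (gaussianReal μ' v).real B := by gcongr

end Gaussian

lemma measureReal_mul_le_of_cond_le {α : Type*} [MeasurableSpace α] {μ ν : Measure α}
    [IsFiniteMeasure μ] [IsFiniteMeasure ν] {A B D : Set α} (hB : MeasurableSet B)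
    (hAD : A ⊆ D) (hBD : B ⊆ Dᶜ) (hμ : 0 < μ.real (A ∪ B)) (hν : 0 < ν.real (A ∪ B))
    (h : μ.real ((A ∪ B) ∩ D) / μ.real (A ∪ B) ≤ ν.real ((A ∪ B) ∩ D) / ν.real (A ∪ B)) :
    μ.real A * ν.real B ≤ ν.real A * μ.real B := by
  have hBD' : Disjoint B D := subset_compl_iff_disjoint_right.1 hBD
  have hAB : Disjoint A B := hBD'.symm.mono_left hAD
  rw [union_inter_distrib_right, inter_eq_left.2 hAD, hBD'.inter_eq, union_empty,
    div_le_div_iff₀ hμ hν, measureReal_union hAB hB, measureReal_union hAB hB] at h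
  linarith

def MassPrecedes (S T : Set ℝ) : Prop :=
  ∃ a b, a < b ∧ volume (S ∩ Iic a) ≠ 0 ∧ volume (T ∩ Ici b) ≠ 0

lemma measure_eq_zero_of_inter_eq_zero_of_compl_inter_eq_zero {α : Type*} [MeasurableSpace α]
    {μ : Measure α} {S t : Set α} (h : μ (S ∩ t) = 0) (h' : μ (Sᶜ ∩ t) = 0) : μ t = 0 :=
  measure_mono_null (fun x hx ↦ (em (x ∈ S)).imp (⟨·, hx⟩) (⟨·, hx⟩)) (measure_union_null h h')

lemma measure_eq_zero_of_inter_Iic_of_inter_Ici {α : Type*} [MeasurableSpace α] [LinearOrder α]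
    {μ : Measure α} {S : Set α} {a : α} (h : μ (S ∩ Iic a) = 0) (h' : μ (S ∩ Ici a) = 0) :
    μ S = 0 :=
  measure_mono_null (fun x hx ↦ (le_total x a).imp (⟨hx, ·⟩) (⟨hx, ·⟩)) (measure_union_null h h')

lemma volume_eq_zero_or_volume_compl_eq_zero_of_not_massPrecedes {E : Set ℝ}
    (h₁ : ¬ MassPrecedes E Eᶜ) (h₂ : ¬ MassPrecedes Eᶜ E) : volume E = 0 ∨ volume Eᶜ = 0 := by
  have key : ∀ a b, a < b → (volume (E ∩ Iic a) = 0 ∧ volume (E ∩ Ici b) = 0) ∨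
      (volume (Eᶜ ∩ Iic a) = 0 ∧ volume (Eᶜ ∩ Ici b) = 0) := by
    intro a b hab
    have h₁ : volume (E ∩ Iic a) = 0 ∨ volume (Eᶜ ∩ Ici b) = 0 := by
      by_contra! h; exact h₁ ⟨a, b, hab, h⟩
    have h₂ : volume (Eᶜ ∩ Iic a) = 0 ∨ volume (E ∩ Ici b) = 0 := by
      by_contra! h; exact h₂ ⟨a, b, hab, h⟩
    rcases h₁ with hE | hE <;> rcases h₂ with hF | hF
    · simpa using measure_eq_zero_of_inter_eq_zero_of_compl_inter_eq_zero hE hF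
    · exact .inl ⟨hE, hF⟩
    · exact .inr ⟨hF, hE⟩
    · simpa using measure_eq_zero_of_inter_eq_zero_of_compl_inter_eq_zero hF hE
  -- Equal alternatives at `(0, 1)` and `(1, 2)` make `E` or `Eᶜ` null on both sides of `1`;
  -- opposite ones would make `Iic 0` null.
  rcases key 0 1 (by norm_num) with ⟨h0, h1⟩ | ⟨h0, h1⟩ <;>
    rcases key 1 2 (by norm_num) with ⟨h1', -⟩ | ⟨h1', -⟩
  · exact .inl (measure_eq_zero_of_inter_Iic_of_inter_Ici h1' h1)
  · simpa using measure_eq_zero_of_inter_eq_zero_of_compl_inter_eq_zero h0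
      (measure_mono_null (inter_subset_inter_right _ (Iic_subset_Iic.2 zero_le_one)) h1')
  · simpa using measure_eq_zero_of_inter_eq_zero_of_compl_inter_eq_zero
      (measure_mono_null (inter_subset_inter_right _ (Iic_subset_Iic.2 zero_le_one)) h1') h0
  · exact .inr (measure_eq_zero_of_inter_Iic_of_inter_Ici h1' h1)

theorem stmt10 (θ₁ θ₂ : ℝ) (h : θ₁ < θ₂) (D : Set ℝ) (hD : MeasurableSet D)
    (hexp : ∀ θ₀ ∈ Icc θ₁ θ₂, ∀ θ ∈ Iio θ₁ ∪ Ioi θ₂,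
      ∀ C : Set ℝ, MeasurableSet C → 0 < volume C →
        ((gaussianReal θ₀ 1) (C ∩ D)).toReal / ((gaussianReal θ₀ 1) C).toReal
          ≤ ((gaussianReal θ 1) (C ∩ D)).toReal / ((gaussianReal θ 1) C).toReal) :
    volume D = 0 ∨ volume Dᶜ = 0 := by
  have hprod : ∀ θ ∈ Iio θ₁ ∪ Ioi θ₂, ∀ A ⊆ D, ∀ B ⊆ Dᶜ, MeasurableSet A → MeasurableSet B →
      volume A ≠ 0 → (gaussianReal θ₁ 1).real A * (gaussianReal θ 1).real B
        ≤ (gaussianReal θ 1).real A * (gaussianReal θ₁ 1).real B := by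
    intro θ hθ A hAD B hBD hA hB hA0
    have hAB0 : volume (A ∪ B) ≠ 0 := fun h0 ↦ hA0 (measure_mono_null subset_union_left h0)
    exact measureReal_mul_le_of_cond_le hB hAD hBD
      (measureReal_gaussianReal_pos _ one_ne_zero hAB0)
      (measureReal_gaussianReal_pos _ one_ne_zero hAB0)
      (hexp θ₁ (left_mem_Icc.2 h.le) θ hθ _ (hA.union hB) (pos_iff_ne_zero.2 hAB0))
  refine volume_eq_zero_or_volume_compl_eq_zero_of_not_massPrecedes ?_ ?_
  · rintro ⟨a, b, hab, hA0, hB0⟩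
    have hA := hD.inter (measurableSet_Iic (a := a))
    have hB := hD.compl.inter (measurableSet_Ici (a := b))
    have hlt := measureReal_gaussianReal_mul_lt_mul (h.trans (lt_add_one θ₂)) one_ne_zero hA hB
      hA0 hB0 hab inter_subset_right inter_subset_right
    have hle := hprod _ (.inr (lt_add_one θ₂)) _ inter_subset_left _ inter_subset_left hA hB hA0
    exact hlt.not_ge hle
  · rintro ⟨a, b, hab, hB0, hA0⟩
    have hA := hD.inter (measurableSet_Ici (a := b))
    have hB := hD.compl.inter (measurableSet_Iic (a := a))
    have hlt := measureReal_gaussianReal_mul_lt_mul (sub_one_lt θ₁) one_ne_zero hB hA hB0 hA0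
      hab inter_subset_right inter_subset_right
    have hle := hprod _ (.inl (sub_one_lt θ₁)) _ inter_subset_left _ inter_subset_left hA hB hA0
    linarith
end

section
/- Consider the model (ℝ, 𝒞, {N(θ,1)}_{θ∈ℝ}) where 𝒞 is the σ-algebra of Borel sets symmetric about c ∈ ℝ. Set θ₁ = c − λ₁, θ₂ = c + λ₁ with λ₁ ≥ 0. Then the experts for the choice between Θ₁ = (-∞,θ₁) ∪ (θ₂,∞) and Θ₀ = [θ₁,θ₂] are exactly the 𝒞-measurable rules a.s. of the form g_t(x) = 1_{[t,∞)}(|x − c|), t ∈ [0,∞]. -/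
/-!
On sets symmetric about `c`, `N(θ, 1)` has density `exp (-(θ - c)² / 2) cosh ((θ - c) (x - c))`
with respect to `N(c, 1)`. It depends on `x` only through `|x - c|`, increases with it, and the
ratio of two such densities increases with `|x - c|` once `|θ - c|` exceeds `|θ₀ - c|`. This
monotone likelihood ratio makes every threshold rule `|x - c| ≥ t` an expert. Conversely, a
symmetric rule is `{|x - c| ∈ T}`; if `T` had mass below `p` while its complement had mass above
`q > p`, then on the union `C` of those two pieces a far alternative would put relatively more
weight on the outer piece, where the rule does not reject. So `T` is null or a.e. a half-line.
-/

open MeasureTheory Set ProbabilityTheory Real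
open scoped ENNReal

/-- Together with measurability, membership in the σ-algebra `𝒞`. -/
def IsSymmAbout (c : ℝ) (S : Set ℝ) : Prop := ∀ x, 2 * c - x ∈ S ↔ x ∈ S

namespace IsSymmAbout

variable {c : ℝ} {S S' : Set ℝ}

lemma preimage_eq (h : IsSymmAbout c S) : (fun x => 2 * c - x) ⁻¹' S = S := Set.ext h

lemma inter (h : IsSymmAbout c S) (h' : IsSymmAbout c S') : IsSymmAbout c (S ∩ S') :=
  fun x => and_congr (h x) (h' x)

lemma diff (h : IsSymmAbout c S) (h' : IsSymmAbout c S') : IsSymmAbout c (S \ S') :=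
  fun x => and_congr (h x) (not_congr (h' x))

lemma union (h : IsSymmAbout c S) (h' : IsSymmAbout c S') : IsSymmAbout c (S ∪ S') :=
  fun x => or_congr (h x) (h' x)

lemma preimage_abs_sub (c : ℝ) (T : Set ℝ) : IsSymmAbout c ((fun x => |x - c|) ⁻¹' T) := by
  intro x
  simp only [mem_preimage, show 2 * c - x - c = -(x - c) by ring, abs_neg]

lemma exists_eq_preimage_abs_sub (hS : MeasurableSet S) (h : IsSymmAbout c S) :
    ∃ T ⊆ Ici 0, MeasurableSet T ∧ S = (fun x => |x - c|) ⁻¹' T := by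
  refine ⟨Ici 0 ∩ (c + ·) ⁻¹' S, inter_subset_left,
    measurableSet_Ici.inter (hS.preimage (measurable_const_add c)), Set.ext fun x => ?_⟩
  simp only [mem_preimage, mem_inter_iff, mem_Ici, abs_nonneg, true_and]
  rcases le_total c x with hcx | hxc
  · rw [abs_of_nonneg (sub_nonneg.2 hcx), add_sub_cancel]
  · rw [abs_of_nonpos (sub_nonpos.2 hxc), ← h x]
    ring_nf

end IsSymmAbout

lemma quasiMeasurePreserving_abs_sub (c : ℝ) :
    Measure.QuasiMeasurePreserving (fun x : ℝ => |x - c|) volume volume := by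
  have hm : Measurable fun x : ℝ => |x - c| := by fun_prop
  refine ⟨hm, Measure.AbsolutelyContinuous.mk fun T hT hT0 => ?_⟩
  rw [Measure.map_apply hm hT]
  have hsub : (fun x : ℝ => |x - c|) ⁻¹' T ⊆ (· + -c) ⁻¹' T ∪ (fun x => c - x) ⁻¹' T := by
    intro x hx
    rcases abs_choice (x - c) with h | h
    · left; simpa [← sub_eq_add_neg, h] using hx
    · right; simpa [h] using hx
  refine measure_mono_null hsub (measure_union_null ?_ ?_)
  · rwa [measure_preimage_add_right]
  · rwa [(Measure.measurePreserving_sub_left volume c).measure_preimage hT.nullMeasurableSet]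

lemma volume_le_volume_preimage_abs_sub (c : ℝ) {T : Set ℝ} (hT : T ⊆ Ici 0) :
    volume T ≤ volume ((fun x : ℝ => |x - c|) ⁻¹' T) := by
  calc volume T = volume ((· + -c) ⁻¹' T) := (measure_preimage_add_right _ _ _).symm
    _ ≤ _ := measure_mono fun x hx => by
      have hx' : x + -c ∈ T := hx
      rwa [mem_preimage, abs_of_nonneg (by simpa [sub_eq_add_neg] using hT hx'), sub_eq_add_neg]

lemma null_or_ae_eq_Ici_of_gap {T : Set ℝ} (hT : T ⊆ Ici 0)
    (hgap : ∀ p q, p < q → 0 < volume (T ∩ Iio p) → volume (Ioi q \ T) = 0) :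
    volume T = 0 ∨ ∃ t, 0 ≤ t ∧ T =ᵐ[volume] Ici t := by
  set P := {p : ℝ | 0 < volume (T ∩ Iio p)}
  have hP0 : ∀ p ∈ P, 0 ≤ p := fun p hp => by
    obtain ⟨x, hxT, hxp⟩ := nonempty_of_measure_ne_zero hp.ne'
    exact (hT hxT).trans hxp.le
  have hbelow : ∀ r, (∀ p < r, p ∉ P) → volume (T ∩ Iio r) = 0 := by
    intro r hr
    refine measure_mono_null (t := ⋃ (p : ℚ) (_ : (p : ℝ) < r), T ∩ Iio (p : ℝ)) ?_
      (measure_iUnion_null fun p => measure_iUnion_null fun hp =>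
        nonpos_iff_eq_zero.1 (not_lt.1 (hr p hp)))
    rintro x ⟨hxT, hxr⟩
    obtain ⟨p, hxp, hpr⟩ := exists_rat_btwn (mem_Iio.1 hxr)
    exact mem_iUnion₂.2 ⟨p, hpr, hxT, hxp⟩
  rcases P.eq_empty_or_nonempty with hPe | hPne
  · left
    refine measure_mono_null (fun x hx => ?_) (measure_iUnion_null fun n : ℕ =>
      hbelow n fun p _ => hPe ▸ notMem_empty p)
    obtain ⟨n, hn⟩ := exists_nat_gt x
    exact mem_iUnion.2 ⟨n, hx, hn⟩
  right
  have hPbdd : BddBelow P := ⟨0, hP0⟩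
  refine ⟨sInf P, le_csInf hPne hP0, ae_eq_set.2 ⟨?_, ?_⟩⟩
  · rw [Set.sdiff_eq, compl_Ici]
    exact hbelow _ fun p hp => notMem_of_lt_csInf hp hPbdd
  · have habove : volume (Ioi (sInf P) \ T) = 0 := by
      refine measure_mono_null (t := ⋃ (q : ℚ) (_ : sInf P < q), Ioi (q : ℝ) \ T) ?_
        (measure_iUnion_null fun q => measure_iUnion_null fun hq => ?_)
      · rintro x ⟨hx, hxT⟩
        obtain ⟨q, hq, hqx⟩ := exists_rat_btwn (mem_Ioi.1 hx)
        exact mem_iUnion₂.2 ⟨q, hq, hqx, hxT⟩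
      · obtain ⟨p, hp, hpq⟩ := exists_lt_of_csInf_lt hPne hq
        exact hgap p q hpq hp
    refine measure_mono_null (fun x ⟨hx, hxT⟩ => ?_)
      (measure_union_null (measure_singleton (sInf P)) habove)
    rcases (mem_Ici.1 hx).eq_or_lt with h | h
    · exact Or.inl h.symm
    · exact Or.inr ⟨h, hxT⟩

lemma cosh_mul_mul_cosh_mul_le {a b u v : ℝ} (hab : |a| ≤ |b|) (hvu : |v| ≤ |u|) :
    cosh (a * u) * cosh (b * v) ≤ cosh (b * u) * cosh (a * v) := by
  suffices key : ∀ {a b u v : ℝ}, 0 ≤ a → a ≤ b → 0 ≤ v → v ≤ u →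
      cosh (a * u) * cosh (b * v) ≤ cosh (b * u) * cosh (a * v) by
    have e : ∀ p q : ℝ, cosh (p * q) = cosh (|p| * |q|) := fun p q => by
      rw [← abs_mul, cosh_abs]
    rw [e a u, e b v, e b u, e a v]
    exact key (abs_nonneg a) hab (abs_nonneg v) hvu
  intro a b u v ha hab hv hvu
  have prod : ∀ x y : ℝ, cosh x * cosh y = (cosh (x + y) + cosh (x - y)) / 2 := fun x y => by
    rw [cosh_add, cosh_sub]; ring
  have hu : 0 ≤ u := hv.trans hvu
  rw [prod, prod]
  have h₁ : cosh (a * u + b * v) ≤ cosh (b * u + a * v) := by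
    rw [cosh_le_cosh, abs_of_nonneg (by nlinarith), abs_of_nonneg (by nlinarith)]
    nlinarith
  have h₂ : cosh (a * u - b * v) ≤ cosh (b * u - a * v) := by
    rw [cosh_le_cosh, abs_of_nonneg (show 0 ≤ b * u - a * v by nlinarith), abs_le]
    constructor <;> nlinarith
  linarith

/-- The likelihood ratio of `N(c + a, 1)` to `N(c, 1)` on the symmetric σ-algebra about `c`,
as a function of `u = x - c`. -/
noncomputable def symmGaussianLR (a u : ℝ) : ℝ := exp (-a ^ 2 / 2) * cosh (a * u)

lemma symmGaussianLR_pos (a u : ℝ) : 0 < symmGaussianLR a u :=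
  mul_pos (exp_pos _) (cosh_pos _)

lemma symmGaussianLR_le_of_abs_le (a : ℝ) {u v : ℝ} (h : |u| ≤ |v|) :
    symmGaussianLR a u ≤ symmGaussianLR a v := by
  refine mul_le_mul_of_nonneg_left ?_ (exp_pos _).le
  rw [cosh_le_cosh, abs_mul, abs_mul]
  exact mul_le_mul_of_nonneg_left h (abs_nonneg a)

lemma symmGaussianLR_lt_of_abs_lt {a u v : ℝ} (ha : a ≠ 0) (h : |u| < |v|) :
    symmGaussianLR a u < symmGaussianLR a v := by
  refine mul_lt_mul_of_pos_left ?_ (exp_pos _)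
  rw [cosh_lt_cosh, abs_mul, abs_mul]
  exact mul_lt_mul_of_pos_left h (abs_pos.2 ha)

/-- Monotone likelihood ratio in `|a|`. -/
lemma symmGaussianLR_mul_le {a b u v : ℝ} (hab : |a| ≤ |b|) (hvu : |v| ≤ |u|) :
    symmGaussianLR a u * symmGaussianLR b v ≤ symmGaussianLR b u * symmGaussianLR a v := by
  unfold symmGaussianLR
  calc _ = exp (-a ^ 2 / 2) * exp (-b ^ 2 / 2) * (cosh (a * u) * cosh (b * v)) := by ring
    _ ≤ exp (-a ^ 2 / 2) * exp (-b ^ 2 / 2) * (cosh (b * u) * cosh (a * v)) :=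
      mul_le_mul_of_nonneg_left (cosh_mul_mul_cosh_mul_le hab hvu) (by positivity)
    _ = _ := by ring

lemma gaussianPDFReal_add_gaussianPDFReal_two_mul_sub (c θ x : ℝ) :
    gaussianPDFReal θ 1 x + gaussianPDFReal θ 1 (2 * c - x)
      = 2 * gaussianPDFReal c 1 x * symmGaussianLR (θ - c) (x - c) := by
  simp only [gaussianPDFReal, symmGaussianLR, cosh_eq, NNReal.coe_one, mul_one]
  rw [show -(x - θ) ^ 2 / 2 = -(x - c) ^ 2 / 2 + (-(θ - c) ^ 2 / 2 + (θ - c) * (x - c)) by ring,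
    show -(2 * c - x - θ) ^ 2 / 2 = -(x - c) ^ 2 / 2 + (-(θ - c) ^ 2 / 2 + -((θ - c) * (x - c)))
      by ring, exp_add, exp_add, exp_add, exp_add]
  ring

lemma setLIntegral_comp_two_mul_sub {c : ℝ} {S : Set ℝ} (hS : MeasurableSet S)
    (hSs : IsSymmAbout c S) {f : ℝ → ℝ≥0∞} (hf : Measurable f) :
    ∫⁻ x in S, f (2 * c - x) = ∫⁻ x in S, f x := by
  conv_lhs => rw [← hSs.preimage_eq]
  exact (Measure.measurePreserving_sub_left volume (2 * c)).setLIntegral_comp_preimage hS hf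

lemma gaussianReal_apply_eq_setLIntegral_symmGaussianLR (c θ : ℝ) {S : Set ℝ}
    (hS : MeasurableSet S) (hSs : IsSymmAbout c S) :
    gaussianReal θ 1 S
      = ∫⁻ x in S, ENNReal.ofReal (symmGaussianLR (θ - c) (x - c)) ∂gaussianReal c 1 := by
  have hLR : Measurable fun x => ENNReal.ofReal (symmGaussianLR (θ - c) (x - c)) := by
    unfold symmGaussianLR; fun_prop
  refine (ENNReal.mul_right_inj two_ne_zero ENNReal.ofNat_ne_top).1 ?_
  calc 2 * gaussianReal θ 1 S
      = (∫⁻ x in S, gaussianPDF θ 1 x) + ∫⁻ x in S, gaussianPDF θ 1 (2 * c - x) := by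
        rw [gaussianReal_apply θ one_ne_zero, two_mul,
          setLIntegral_comp_two_mul_sub hS hSs (measurable_gaussianPDF θ 1)]
    _ = ∫⁻ x in S, (gaussianPDF θ 1 x + gaussianPDF θ 1 (2 * c - x)) :=
        (lintegral_add_left (measurable_gaussianPDF θ 1) _).symm
    _ = ∫⁻ x in S, 2 * (gaussianPDF c 1 x * ENNReal.ofReal (symmGaussianLR (θ - c) (x - c))) := by
        refine setLIntegral_congr_fun hS fun x _ => ?_
        simp only [gaussianPDF]
        rw [← ENNReal.ofReal_add (gaussianPDFReal_nonneg _ _ _) (gaussianPDFReal_nonneg _ _ _),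
          gaussianPDFReal_add_gaussianPDFReal_two_mul_sub,
          ENNReal.ofReal_mul (mul_nonneg zero_le_two (gaussianPDFReal_nonneg _ _ _)),
          ENNReal.ofReal_mul zero_le_two, ENNReal.ofReal_ofNat, mul_assoc]
    _ = 2 * ∫⁻ x in S, ENNReal.ofReal (symmGaussianLR (θ - c) (x - c)) ∂gaussianReal c 1 := by
        rw [lintegral_const_mul _ (by fun_prop),
          gaussianReal_of_var_ne_zero c one_ne_zero,
          setLIntegral_withDensity_eq_setLIntegral_mul _ (measurable_gaussianPDF c 1) hLR hS]
        rfl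

lemma setLIntegral_mul_setLIntegral_le {α : Type*} [MeasurableSpace α] {μ : Measure α}
    {f g : α → ℝ≥0∞} (hf : Measurable f) (hg : Measurable g) {A B : Set α}
    (h : ∀ x ∈ A, ∀ y ∈ B, f x * g y ≤ g x * f y) :
    (∫⁻ x in A, f x ∂μ) * ∫⁻ y in B, g y ∂μ ≤ (∫⁻ x in A, g x ∂μ) * ∫⁻ y in B, f y ∂μ := by
  rw [← lintegral_mul_const _ hf, ← lintegral_mul_const _ hg]
  refine setLIntegral_mono (hg.mul_const _) fun x hx => ?_
  rw [← lintegral_const_mul _ hg, ← lintegral_const_mul _ hf]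
  exact setLIntegral_mono (hf.const_mul _) (h x hx)

lemma gaussianReal_mul_le_mul_of_isSymmAbout {c θ₀ θ : ℝ} (hθ : |θ₀ - c| ≤ |θ - c|)
    {A B : Set ℝ} (hA : MeasurableSet A) (hB : MeasurableSet B)
    (hAs : IsSymmAbout c A) (hBs : IsSymmAbout c B)
    (hAB : ∀ x ∈ A, ∀ y ∈ B, |y - c| ≤ |x - c|) :
    gaussianReal θ₀ 1 A * gaussianReal θ 1 B ≤ gaussianReal θ 1 A * gaussianReal θ₀ 1 B := by
  simp only [gaussianReal_apply_eq_setLIntegral_symmGaussianLR c _ hA hAs,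
    gaussianReal_apply_eq_setLIntegral_symmGaussianLR c _ hB hBs]
  refine setLIntegral_mul_setLIntegral_le (by unfold symmGaussianLR; fun_prop)
    (by unfold symmGaussianLR; fun_prop) fun x hx y hy => ?_
  rw [← ENNReal.ofReal_mul (symmGaussianLR_pos _ _).le,
    ← ENNReal.ofReal_mul (symmGaussianLR_pos _ _).le]
  exact ENNReal.ofReal_le_ofReal (symmGaussianLR_mul_le hθ (hAB x hx y hy))

lemma gaussianReal_mul_lt_mul_of_isSymmAbout {c θ p q : ℝ} (hθ : θ ≠ c) (hp : 0 ≤ p)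
    (hpq : p < q) {A B : Set ℝ} (hA : MeasurableSet A) (hB : MeasurableSet B)
    (hAs : IsSymmAbout c A) (hBs : IsSymmAbout c B)
    (hAp : ∀ x ∈ A, |x - c| ≤ p) (hBq : ∀ y ∈ B, q ≤ |y - c|)
    (hA0 : gaussianReal c 1 A ≠ 0) (hB0 : gaussianReal c 1 B ≠ 0) :
    gaussianReal θ 1 A * gaussianReal c 1 B < gaussianReal c 1 A * gaussianReal θ 1 B := by
  set a := ENNReal.ofReal (symmGaussianLR (θ - c) p)
  set b := ENNReal.ofReal (symmGaussianLR (θ - c) q)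
  have hA' : gaussianReal θ 1 A ≤ a * gaussianReal c 1 A := by
    rw [gaussianReal_apply_eq_setLIntegral_symmGaussianLR c θ hA hAs, ← setLIntegral_const]
    refine setLIntegral_mono measurable_const fun x hx => ENNReal.ofReal_le_ofReal ?_
    exact symmGaussianLR_le_of_abs_le _ ((hAp x hx).trans (le_abs_self p))
  have hB' : b * gaussianReal c 1 B ≤ gaussianReal θ 1 B := by
    rw [gaussianReal_apply_eq_setLIntegral_symmGaussianLR c θ hB hBs, ← setLIntegral_const]
    refine setLIntegral_mono (by unfold symmGaussianLR; fun_prop) fun y hy =>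
      ENNReal.ofReal_le_ofReal ?_
    refine symmGaussianLR_le_of_abs_le _ ?_
    rw [abs_of_nonneg (hp.trans hpq.le)]
    exact hBq y hy
  have hab : a < b := (ENNReal.ofReal_lt_ofReal_iff (symmGaussianLR_pos _ _)).2
    (symmGaussianLR_lt_of_abs_lt (sub_ne_zero.2 hθ)
      (by rwa [abs_of_nonneg hp, abs_of_nonneg (hp.trans hpq.le)]))
  calc gaussianReal θ 1 A * gaussianReal c 1 B
      ≤ a * (gaussianReal c 1 A * gaussianReal c 1 B) := by
        rw [← mul_assoc]; exact mul_le_mul_left hA' _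
    _ < b * (gaussianReal c 1 A * gaussianReal c 1 B) :=
        ENNReal.mul_lt_mul_left (mul_ne_zero hA0 hB0) (by finiteness) hab
    _ = gaussianReal c 1 A * (b * gaussianReal c 1 B) := by ring
    _ ≤ gaussianReal c 1 A * gaussianReal θ 1 B := mul_le_mul_right hB' _

lemma toReal_measure_inter_div_le_iff {α : Type*} [MeasurableSpace α] {μ ν : Measure α}
    [IsFiniteMeasure μ] [IsFiniteMeasure ν] {C D : Set α} (hD : MeasurableSet D)
    (hμ : μ C ≠ 0) (hν : ν C ≠ 0) :
    (μ (C ∩ D)).toReal / (μ C).toReal ≤ (ν (C ∩ D)).toReal / (ν C).toReal ↔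
      μ (C ∩ D) * ν (C \ D) ≤ ν (C ∩ D) * μ (C \ D) := by
  rw [div_le_div_iff₀ (ENNReal.toReal_pos hμ (measure_ne_top _ _))
      (ENNReal.toReal_pos hν (measure_ne_top _ _)), ← ENNReal.toReal_mul, ← ENNReal.toReal_mul,
    ENNReal.toReal_le_toReal (by finiteness) (by finiteness), ← measure_inter_add_sdiff C hD,
    ← measure_inter_add_sdiff C hD, mul_add, mul_add, mul_comm (ν (C ∩ D)) (μ (C ∩ D))]
  exact ENNReal.add_le_add_iff_left (by finiteness)

lemma gaussianReal_ne_zero_of_volume_ne_zero (μ : ℝ) {S : Set ℝ} (hS : volume S ≠ 0) :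
    gaussianReal μ 1 S ≠ 0 :=
  fun h => hS (gaussianReal_absolutelyContinuous' μ one_ne_zero h)

/-- The rule `D` (choose `Θ₁`) is an expert for `Θ₀ = [c - lam, c + lam]` against `Θ₁` its
complement, events being restricted to the symmetric σ-algebra `𝒞`. -/
def IsSymmExpert (c lam : ℝ) (D : Set ℝ) : Prop :=
  ∀ θ₀ ∈ Icc (c - lam) (c + lam), ∀ θ ∈ Iio (c - lam) ∪ Ioi (c + lam),
    ∀ C : Set ℝ, MeasurableSet C → IsSymmAbout c C → 0 < volume C →
      (gaussianReal θ₀ 1 (C ∩ D)).toReal / (gaussianReal θ₀ 1 C).toReal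
        ≤ (gaussianReal θ 1 (C ∩ D)).toReal / (gaussianReal θ 1 C).toReal

namespace IsSymmExpert

variable {c lam : ℝ}

lemma congr_ae {D D' : Set ℝ} (h : IsSymmExpert c lam D') (hDD' : D =ᵐ[volume] D') :
    IsSymmExpert c lam D := by
  intro θ₀ hθ₀ θ hθ C hC hCs hCvol
  have hcongr : ∀ θ', gaussianReal θ' 1 (C ∩ D) = gaussianReal θ' 1 (C ∩ D') := fun θ' =>
    measure_congr ((ae_eq_refl C).inter
      ((gaussianReal_absolutelyContinuous θ' one_ne_zero).ae_eq hDD'))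
  rw [hcongr, hcongr]
  exact h θ₀ hθ₀ θ hθ C hC hCs hCvol

lemma empty : IsSymmExpert c lam ∅ := by
  intro θ₀ _ θ _ C _ _ _
  simp

lemma preimage_abs_sub_Ici (t : ℝ) : IsSymmExpert c lam ((fun x => |x - c|) ⁻¹' Ici t) := by
  intro θ₀ hθ₀ θ hθ C hC hCs hCvol
  have hθ₀θ : |θ₀ - c| ≤ |θ - c| := by
    refine (show |θ₀ - c| ≤ lam from
      abs_sub_le_iff.2 ⟨by linarith [hθ₀.2], by linarith [hθ₀.1]⟩).trans ?_
    rcases hθ with hθ | hθ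
    · exact le_abs.2 (Or.inr (by linarith [mem_Iio.1 hθ]))
    · exact le_abs.2 (Or.inl (by linarith [mem_Ioi.1 hθ]))
  have hE : MeasurableSet ((fun x => |x - c|) ⁻¹' Ici t) :=
    measurableSet_Ici.preimage (by fun_prop)
  have hEs := IsSymmAbout.preimage_abs_sub c (Ici t)
  rw [toReal_measure_inter_div_le_iff hE (gaussianReal_ne_zero_of_volume_ne_zero _ hCvol.ne')
    (gaussianReal_ne_zero_of_volume_ne_zero _ hCvol.ne')]
  exact gaussianReal_mul_le_mul_of_isSymmAbout hθ₀θ (hC.inter hE) (hC.diff hE) (hCs.inter hEs)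
    (hCs.diff hEs) fun x hx y hy => (not_le.1 hy.2).le.trans hx.2

/-- Test on `C = {|x - c| ∈ (T ∩ [0, p)) ∪ ((q, ∞) \ T)}` against `θ = c + lam + 1`: the
likelihood ratio is larger on the outer piece, where the rule does not reject. -/
lemma not_of_gap (hlam : 0 ≤ lam) {T : Set ℝ} (hT0 : T ⊆ Ici 0) (hT : MeasurableSet T)
    {p q : ℝ} (hpq : p < q) (hp : 0 < volume (T ∩ Iio p)) (hq : 0 < volume (Ioi q \ T)) :
    ¬ IsSymmExpert c lam ((fun x => |x - c|) ⁻¹' T) := by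
  intro H
  have hm : Measurable fun x : ℝ => |x - c| := by fun_prop
  obtain ⟨r, hrT, hrp⟩ := nonempty_of_measure_ne_zero hp.ne'
  have hp0 : 0 ≤ p := (hT0 hrT).trans hrp.le
  set A := (fun x => |x - c|) ⁻¹' (T ∩ Iio p)
  set B := (fun x => |x - c|) ⁻¹' (Ioi q \ T)
  have hA : MeasurableSet A := (hT.inter measurableSet_Iio).preimage hm
  have hB : MeasurableSet B := (measurableSet_Ioi.diff hT).preimage hm
  have hAs := IsSymmAbout.preimage_abs_sub c (T ∩ Iio p)
  have hBs := IsSymmAbout.preimage_abs_sub c (Ioi q \ T)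
  have hAvol : 0 < volume A :=
    hp.trans_le (volume_le_volume_preimage_abs_sub c (inter_subset_left.trans hT0))
  have hBvol : 0 < volume B := hq.trans_le (volume_le_volume_preimage_abs_sub c
    fun x hx => (hp0.trans hpq.le).trans (le_of_lt hx.1))
  have hABvol : 0 < volume (A ∪ B) := hAvol.trans_le (measure_mono subset_union_left)
  have hle := H c ⟨by linarith, by linarith⟩ (c + (lam + 1)) (Or.inr (mem_Ioi.2 (by linarith)))
    (A ∪ B) (hA.union hB) (hAs.union hBs) hABvol
  have hAD : (A ∪ B) ∩ (fun x => |x - c|) ⁻¹' T = A := by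
    ext x; simp only [A, B, mem_inter_iff, mem_union, mem_preimage, mem_sdiff]; tauto
  have hBD : (A ∪ B) \ (fun x => |x - c|) ⁻¹' T = B := by
    ext x; simp only [A, B, mem_inter_iff, mem_union, mem_preimage, mem_sdiff]; tauto
  rw [toReal_measure_inter_div_le_iff (hT.preimage hm)
    (gaussianReal_ne_zero_of_volume_ne_zero _ hABvol.ne')
    (gaussianReal_ne_zero_of_volume_ne_zero _ hABvol.ne'), hAD, hBD] at hle
  exact hle.not_gt (gaussianReal_mul_lt_mul_of_isSymmAbout (by linarith) hp0 hpq hA hB hAs hBs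
    (fun x hx => le_of_lt hx.2) (fun y hy => le_of_lt hy.1)
    (gaussianReal_ne_zero_of_volume_ne_zero c hAvol.ne')
    (gaussianReal_ne_zero_of_volume_ne_zero c hBvol.ne'))

lemma null_or_ae_eq_Ici (hlam : 0 ≤ lam) {T : Set ℝ} (hT0 : T ⊆ Ici 0) (hT : MeasurableSet T)
    (h : IsSymmExpert c lam ((fun x => |x - c|) ⁻¹' T)) :
    volume T = 0 ∨ ∃ t, 0 ≤ t ∧ T =ᵐ[volume] Ici t :=
  null_or_ae_eq_Ici_of_gap hT0 fun _ _ hpq hp =>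
    by_contra fun hq => not_of_gap hlam hT0 hT hpq hp (pos_iff_ne_zero.2 hq) h

end IsSymmExpert

theorem stmt13 (c lam : ℝ) (hlam : 0 ≤ lam)
    (D : Set ℝ) (hD : MeasurableSet D)
    (hDsym : ∀ x, (2 * c - x) ∈ D ↔ x ∈ D) :
    (∀ θ₀ ∈ Icc (c - lam) (c + lam),
      ∀ θ ∈ Iio (c - lam) ∪ Ioi (c + lam),
        ∀ C : Set ℝ, MeasurableSet C → (∀ x, (2 * c - x) ∈ C ↔ x ∈ C) →
          0 < volume C →
          ((gaussianReal θ₀ 1) (C ∩ D)).toReal / ((gaussianReal θ₀ 1) C).toReal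
            ≤ ((gaussianReal θ 1) (C ∩ D)).toReal / ((gaussianReal θ 1) C).toReal)
    ↔ (volume D = 0 ∨
        ∃ t : ℝ, 0 ≤ t ∧ volume (symmDiff D {x | t ≤ |x - c|}) = 0) := by
  obtain ⟨T, hT0, hT, rfl⟩ := IsSymmAbout.exists_eq_preimage_abs_sub hD hDsym
  have hqmp := quasiMeasurePreserving_abs_sub c
  simp only [measure_symmDiff_eq_zero_iff]
  refine ⟨fun H => ?_, ?_⟩
  · exact (IsSymmExpert.null_or_ae_eq_Ici hlam hT0 hT H).imp hqmp.preimage_null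
      fun ⟨t, ht, hTt⟩ => ⟨t, ht, hqmp.preimage_ae_eq hTt⟩
  · rintro (hnull | ⟨t, -, hTt⟩)
    · exact IsSymmExpert.empty.congr_ae (ae_eq_empty.2 hnull)
    · exact (IsSymmExpert.preimage_abs_sub_Ici t).congr_ae hTt
end

section
/- Gamma–gamma marginalization identity: for p, q > 0, θ ≥ 0, t > 0, u > 0, Σ_{m=0}^∞ ∫₀^t ∫₀^∞ [θ^m u^q x^{p+m−1} / (m! Γ(p+m) Γ(q))] · υ^{−(p+q+2m+1)} e^{−(θ+u+x)/υ} dυ dx = Σ_{m=0}^∞ [Γ(q+m)/(m! Γ(q))] · [θ^m u^q / (θ+u)^{q+m}] · F_β(p+m, q+m, t/(θ+u)), where F_β(a,b,z) is the CDF at z of the beta-prime distribution β(a,b) on ℝ⁺ with density [Γ(a+b)/(Γ(a)Γ(b))] y^{a−1}(1+y)^{−(a+b)}. In particular, the inner υ-integral evaluates via ∫₀^∞ υ^{−(r+1)} e^{−c/υ} dυ = Γ(r)/c^r. -/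
open MeasureTheory Set Real

private lemma intA {r c : ℝ} (hr : 0 < r) (hc : 0 < c) :
    (∫ υ in Ioi (0 : ℝ), υ ^ (-(r + 1)) * Real.exp (-c / υ)) = Real.Gamma r / c ^ r := by
  have base : (∫ x in Ioi (0 : ℝ), x ^ (-(r + 1)) * Real.exp (-1 / x)) = Real.Gamma r := by
    have h := integral_comp_rpow_Ioi (fun y => Real.exp (-y) * y ^ (r - 1)) (p := -1)
      (by norm_num)
    rw [Real.Gamma_eq_integral hr, ← h]
    refine setIntegral_congr_fun measurableSet_Ioi (fun x hx => ?_)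
    have hx0 : (0 : ℝ) < x := hx
    have h1 : x ^ (-1 : ℝ) = x⁻¹ := Real.rpow_neg_one x
    simp only [smul_eq_mul, h1]
    rw [Real.inv_rpow hx0.le, ← Real.rpow_neg hx0.le]
    rw [show x ^ (-(r + 1)) = x ^ (-1 - 1 : ℝ) * x ^ (-(r - 1)) by
      rw [← Real.rpow_add hx0]; congr 1; ring]
    rw [show -x⁻¹ = -1 / x by field_simp]
    simp; ring
  have h2 := integral_comp_mul_right_Ioi
    (fun υ => υ ^ (-(r + 1)) * Real.exp (-1 / υ)) 0 (inv_pos.mpr hc)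
  simp only [zero_mul, inv_inv, smul_eq_mul, base] at h2
  have h3 : (∫ υ in Ioi (0 : ℝ), (υ * c⁻¹) ^ (-(r + 1)) * Real.exp (-1 / (υ * c⁻¹)))
      = ∫ υ in Ioi (0 : ℝ), c ^ (r + 1) * (υ ^ (-(r + 1)) * Real.exp (-c / υ)) := by
    refine setIntegral_congr_fun measurableSet_Ioi (fun υ hυ => ?_)
    have hυ0 : (0 : ℝ) < υ := hυ
    rw [Real.mul_rpow hυ0.le (inv_nonneg.mpr hc.le), Real.inv_rpow hc.le,
      ← Real.rpow_neg hc.le, neg_neg]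
    rw [show -1 / (υ * c⁻¹) = -c / υ by field_simp]
    ring
  rw [h3, integral_const_mul] at h2
  have hc1 : c ^ (r + 1) = c ^ r * c := by rw [Real.rpow_add hc, Real.rpow_one]
  have hcr : (0 : ℝ) < c ^ r := Real.rpow_pos_of_pos hc r
  rw [hc1] at h2
  rw [eq_div_iff hcr.ne']
  refine mul_left_cancel₀ hc.ne' ?_
  linear_combination h2

theorem stmt19 (p q θ t u : ℝ)
    (hp : 0 < p) (hq : 0 < q) (hθ : 0 ≤ θ) (ht : 0 < t) (hu : 0 < u)
    (Fβ : ℝ → ℝ → ℝ → ℝ)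
    (hFβ : ∀ a b z, Fβ a b z = ∫ y in Ioc (0 : ℝ) z,
      Real.Gamma (a + b) / (Real.Gamma a * Real.Gamma b) *
        (y ^ (a - 1) * (1 + y) ^ (-(a + b)))) :
    ((∑' m : ℕ, ∫ x in Ioc (0 : ℝ) t, ∫ υ in Ioi (0 : ℝ),
        θ ^ m * u ^ q * x ^ (p + (m : ℝ) - 1) /
            ((m.factorial : ℝ) * Real.Gamma (p + m) * Real.Gamma q) *
          υ ^ (-(p + q + 2 * (m : ℝ) + 1)) * Real.exp (-(θ + u + x) / υ))
      = ∑' m : ℕ,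
          Real.Gamma (q + m) / ((m.factorial : ℝ) * Real.Gamma q) *
            (θ ^ m * u ^ q / (θ + u) ^ (q + (m : ℝ))) *
            Fβ (p + m) (q + m) (t / (θ + u)))
    ∧ ∀ r c : ℝ, 0 < r → 0 < c →
        (∫ υ in Ioi (0 : ℝ), υ ^ (-(r + 1)) * Real.exp (-c / υ))
          = Real.Gamma r / c ^ r := by
  constructor
  · refine tsum_congr fun m => ?_
    have hs : (0 : ℝ) < θ + u := by linarith
    have hm : (0 : ℝ) ≤ (m : ℝ) := Nat.cast_nonneg m
    have hr : (0 : ℝ) < p + q + 2 * m := by linarith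
    have hfac : (0 : ℝ) < (m.factorial : ℝ) := by positivity
    have hΓp : (0 : ℝ) < Real.Gamma (p + m) := Real.Gamma_pos_of_pos (by linarith)
    have hΓq : (0 : ℝ) < Real.Gamma q := Real.Gamma_pos_of_pos hq
    have hΓqm : (0 : ℝ) < Real.Gamma (q + m) := Real.Gamma_pos_of_pos (by linarith)
    set r : ℝ := p + q + 2 * m with hrdef
    set D : ℝ := (m.factorial : ℝ) * Real.Gamma (p + m) * Real.Gamma q with hD
    set f : ℝ → ℝ := fun x =>
      θ ^ m * u ^ q * x ^ (p + (m : ℝ) - 1) / D * (Real.Gamma r / (θ + u + x) ^ r) with hf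
    -- Step 1: evaluate the inner integral
    have step1 : (∫ x in Ioc (0 : ℝ) t, ∫ υ in Ioi (0 : ℝ),
        θ ^ m * u ^ q * x ^ (p + (m : ℝ) - 1) / D *
          υ ^ (-(p + q + 2 * (m : ℝ) + 1)) * Real.exp (-(θ + u + x) / υ))
        = ∫ x in Ioc (0 : ℝ) t, f x := by
      refine setIntegral_congr_fun measurableSet_Ioc (fun x hx => ?_)
      have hx0 : (0 : ℝ) < x := hx.1
      have hsx : (0 : ℝ) < θ + u + x := by linarith
      have : (∫ υ in Ioi (0 : ℝ),
          θ ^ m * u ^ q * x ^ (p + (m : ℝ) - 1) / D *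
            υ ^ (-(p + q + 2 * (m : ℝ) + 1)) * Real.exp (-(θ + u + x) / υ))
          = ∫ υ in Ioi (0 : ℝ),
          θ ^ m * u ^ q * x ^ (p + (m : ℝ) - 1) / D *
            (υ ^ (-(r + 1)) * Real.exp (-(θ + u + x) / υ)) := by
        refine setIntegral_congr_fun measurableSet_Ioi (fun υ hυ => ?_)
        rw [hrdef]; ring_nf
      rw [this, integral_const_mul, intA hr hsx]
    rw [step1]
    -- Step 2: change of variables x = (θ+u) y
    have h2 : (∫ x in Ioc (0 : ℝ) t, f x) = (θ + u) * ∫ y in Ioc (0 : ℝ) (t / (θ + u)),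
        f ((θ + u) * y) := by
      rw [← intervalIntegral.integral_of_le ht.le,
        ← intervalIntegral.integral_of_le (by positivity : (0:ℝ) ≤ t / (θ + u)),
        intervalIntegral.integral_comp_mul_left f hs.ne', mul_zero,
        mul_div_cancel₀ _ hs.ne', smul_eq_mul, ← mul_assoc,
        mul_inv_cancel₀ hs.ne', one_mul]
    rw [h2]
    -- Step 3: rewrite the integrand
    set K : ℝ := θ ^ m * u ^ q * (θ + u) ^ (p + (m : ℝ) - 1) * Real.Gamma r /
        (D * (θ + u) ^ r) with hK
    have h3 : (∫ y in Ioc (0 : ℝ) (t / (θ + u)), f ((θ + u) * y))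
        = ∫ y in Ioc (0 : ℝ) (t / (θ + u)),
            K * (y ^ (p + (m : ℝ) - 1) * (1 + y) ^ (-r)) := by
      refine setIntegral_congr_fun measurableSet_Ioc (fun y hy => ?_)
      have hy0 : (0 : ℝ) < y := hy.1
      have h1y : (0 : ℝ) < 1 + y := by linarith
      have e1 : ((θ + u) * y) ^ (p + (m : ℝ) - 1)
          = (θ + u) ^ (p + (m : ℝ) - 1) * y ^ (p + (m : ℝ) - 1) :=
        Real.mul_rpow hs.le hy0.le
      have e2 : (θ + u + (θ + u) * y) ^ r = (θ + u) ^ r * (1 + y) ^ r := by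
        rw [show θ + u + (θ + u) * y = (θ + u) * (1 + y) by ring,
          Real.mul_rpow hs.le h1y.le]
      simp only [hf, hK]
      rw [e1, e2, Real.rpow_neg h1y.le]
      have hne1 : (θ + u) ^ r ≠ 0 := (Real.rpow_pos_of_pos hs r).ne'
      have hne2 : (1 + y) ^ r ≠ 0 := (Real.rpow_pos_of_pos h1y r).ne'
      have hDne : D ≠ 0 := by positivity
      field_simp
    rw [h3, integral_const_mul]
    -- Step 4: rewrite the RHS
    rw [hFβ]
    have e3 : (p + (m : ℝ)) + (q + (m : ℝ)) = r := by rw [hrdef]; ring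
    rw [e3, integral_const_mul]
    -- Step 5: constants match
    have hsp : (0 : ℝ) < (θ + u) ^ (p + (m : ℝ) - 1) := Real.rpow_pos_of_pos hs _
    have hsr : (0 : ℝ) < (θ + u) ^ r := Real.rpow_pos_of_pos hs _
    have hsq : (0 : ℝ) < (θ + u) ^ (q + (m : ℝ)) := Real.rpow_pos_of_pos hs _
    have hpow : (θ + u) ^ r = (θ + u) ^ (p + (m : ℝ) - 1) * ((θ + u) ^ (q + (m : ℝ)) * (θ + u)) := by
      rw [show r = (p + (m : ℝ) - 1) + ((q + (m : ℝ)) + 1) by rw [hrdef]; ring,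
        Real.rpow_add hs, Real.rpow_add hs, Real.rpow_one]
    have hcon : (θ + u) * K = Real.Gamma (q + m) / ((m.factorial : ℝ) * Real.Gamma q) *
        (θ ^ m * u ^ q / (θ + u) ^ (q + (m : ℝ))) *
        (Real.Gamma r / (Real.Gamma (p + m) * Real.Gamma (q + m))) := by
      rw [hK, hD]
      field_simp
      rw [hpow]; ring
    linear_combination (∫ y in Ioc (0 : ℝ) (t / (θ + u)),
      y ^ (p + (m : ℝ) - 1) * (1 + y) ^ (-r)) * hcon
  · intro r c hr hc
    exact intA hr hc
end
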